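/- arXiv:2307.04224 — 2 statements merged into one kernel-verified Lean document; each statement's English description precedes it below -/
import Mathlib

section
/- Let n ≥ 1, let w : ℝ → ℝ be differentiable at t_0, and define the curve γ(t) = ν(cos(w(t))·e_0 + sin(w(t))·e_1) in EuclideanSpace ℝ A(n,d). Then γ is differentiable at t_0 and ‖γ'(t_0)‖² = d·w'(t_0)². (In particular, such a curve is parametrized by arc length exactly when w'(t)² = 1/d, which is the key computation identifying geodesics of the spherical Veronese variety through x_0^d.) -/
open scoped RealInnerProductSpace BigOperators

noncomputable section

/-- The set of exponent vectors `α : Fin (n+1) → ℕ` with `|α| = d`. -/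
abbrev Exps (n d : ℕ) : Type := {α : Fin (n + 1) → ℕ // ∑ i, α i = d}

instance (n d : ℕ) : Fintype (Exps n d) :=
  Fintype.subtype (Finset.Nat.antidiagonalTuple (n + 1) d) fun _ =>
    Finset.Nat.mem_antidiagonalTuple

/-- The Veronese map in Bombieri–Weyl coordinates. -/
def veronese (n d : ℕ) (ℓ : EuclideanSpace ℝ (Fin (n + 1))) :
    EuclideanSpace ℝ (Exps n d) := WithLp.toLp 2 fun (α : Exps n d) =>
  Real.sqrt ((d.factorial : ℝ) / ∏ i, ((α.1 i).factorial : ℝ)) * ∏ i, ℓ i ^ α.1 i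

/-! With the Bombieri–Weyl weights the multinomial theorem reads `⟪ν x, ν y⟫ = ⟪x, y⟫ ^ d`.
Along the great circle `g θ = ν (cos θ • e₀ + sin θ • e₁)` this gives
`⟪g u, g v⟫ = cos (u - v) ^ d`, a function of `u - v` only, and differentiating once in each
variable at `u = v = θ` yields `‖g' θ‖² = -(cos ^ d)''(0) = d`.
The chain rule then multiplies the speed by `w'`. -/

open Real

theorem sq_sqrt_factorial_div_prod_factorial (d : ℕ) {ι : Type*} [Fintype ι] {α : ι → ℕ}
    (hα : ∑ i, α i = d) :
    Real.sqrt ((d.factorial : ℝ) / ∏ i, ((α i).factorial : ℝ)) ^ 2 =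
      Nat.multinomial Finset.univ α := by
  rw [Real.sq_sqrt (by positivity), ← hα, ← Nat.multinomial_spec, Nat.cast_mul, Nat.cast_prod,
    mul_div_cancel_left₀ _ (by positivity)]

theorem inner_veronese (n d : ℕ) (x y : EuclideanSpace ℝ (Fin (n + 1))) :
    ⟪veronese n d x, veronese n d y⟫ = ⟪x, y⟫ ^ d := by
  simp only [PiLp.inner_apply, veronese, RCLike.inner_apply, conj_trivial]
  rw [Finset.sum_pow_eq_sum_piAntidiag,
    Finset.sum_subtype (p := fun a : Fin (n + 1) → ℕ => ∑ i, a i = d)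
      (F := inferInstanceAs (Fintype (Exps n d))) _ (by simp)]
  refine Finset.sum_congr rfl fun α _ => ?_
  rw [← sq_sqrt_factorial_div_prod_factorial d α.2]
  simp only [mul_pow, Finset.prod_mul_distrib]
  ring

theorem differentiable_veronese (n d : ℕ) : Differentiable ℝ (veronese n d) :=
  differentiable_euclidean.2 fun α => by
    simp only [veronese]
    fun_prop

theorem inner_cos_smul_add_sin_smul {E : Type*} [NormedAddCommGroup E]
    [InnerProductSpace ℝ E] {a b : E} (ha : ‖a‖ = 1) (hb : ‖b‖ = 1) (hab : ⟪a, b⟫ = 0)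
    (u v : ℝ) :
    ⟪cos u • a + sin u • b, cos v • a + sin v • b⟫ = cos (u - v) := by
  simp only [inner_add_left, inner_add_right, real_inner_smul_left, real_inner_smul_right,
    real_inner_self_eq_norm_sq, ha, hb, hab, real_inner_comm a b, cos_sub]
  ring

theorem norm_deriv_sq_of_inner_eq_comp_sub {E : Type*} [NormedAddCommGroup E]
    [InnerProductSpace ℝ E] {g : ℝ → E} {k : ℝ → ℝ} {c θ : ℝ}
    (hg : DifferentiableAt ℝ g θ) (hgk : ∀ u v, ⟪g u, g v⟫ = k (u - v))
    (hk : Differentiable ℝ k) (hk' : HasDerivAt (deriv k) c 0) :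
    ‖deriv g θ‖ ^ 2 = -c := by
  set G := deriv g θ
  have hG : HasDerivAt g G θ := hg.hasDerivAt
  have hGk : ∀ u, ⟪g u, G⟫ = -deriv k (u - θ) := by
    intro u
    have h₁ : HasDerivAt (fun v => ⟪g u, g v⟫) ⟪g u, G⟫ θ := by
      simpa using (hasDerivAt_const θ (g u)).inner ℝ hG
    have h₂ : HasDerivAt (fun v => k (u - v)) (-deriv k (u - θ)) θ :=
      (hk _).hasDerivAt.comp_const_sub u θ
    simp only [hgk] at h₁
    exact h₁.unique h₂
  have h₁ : HasDerivAt (fun u => ⟪g u, G⟫) ⟪G, G⟫ θ := by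
    simpa using hG.inner ℝ (hasDerivAt_const θ G)
  have h₂ : HasDerivAt (fun u => -deriv k (u - θ)) (-c) θ := by
    rw [← sub_self θ] at hk'
    exact (hk'.comp_sub_const θ θ).neg
  simp only [hGk] at h₁
  rw [← real_inner_self_eq_norm_sq]
  exact h₁.unique h₂

theorem hasDerivAt_deriv_cos_pow_zero (d : ℕ) :
    HasDerivAt (deriv fun x => cos x ^ d) (-d) 0 := by
  have hderiv : deriv (fun x => cos x ^ d) = fun x => -(d * cos x ^ (d - 1) * sin x) := by
    ext x; simp
  rw [hderiv]
  simpa using ((((hasDerivAt_cos 0).fun_pow (d - 1)).const_mul (d : ℝ)).fun_mul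
    (hasDerivAt_sin 0)).fun_neg

theorem veronese_curve_speed_general (n d : ℕ) (hn : 0 < n)
    (w : ℝ → ℝ) (t₀ : ℝ) (hw : DifferentiableAt ℝ w t₀) :
    DifferentiableAt ℝ
      (fun t => veronese n d
        (Real.cos (w t) • EuclideanSpace.single 0 1 +
          Real.sin (w t) • EuclideanSpace.single 1 1)) t₀ ∧
    ‖deriv (fun t => veronese n d
        (Real.cos (w t) • EuclideanSpace.single 0 1 +
          Real.sin (w t) • EuclideanSpace.single 1 1)) t₀‖ ^ 2 =
      (d : ℝ) * (deriv w t₀) ^ 2 := by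
  set g : ℝ → EuclideanSpace ℝ (Exps n d) := fun θ => veronese n d
    (cos θ • EuclideanSpace.single 0 1 + sin θ • EuclideanSpace.single 1 1)
  have hg : Differentiable ℝ g :=
    (differentiable_veronese n d).comp (by fun_prop)
  have h01 : (0 : Fin (n + 1)) ≠ 1 := by
    simp [Fin.ext_iff, Nat.mod_eq_of_lt (by omega : 1 < n + 1)]
  have hgk : ∀ u v, ⟪g u, g v⟫ = cos (u - v) ^ d := fun u v => by
    rw [inner_veronese, inner_cos_smul_add_sin_smul (by simp) (by simp) ?_]
    simp [EuclideanSpace.inner_single_left, h01.symm]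
  have hspeed : ‖deriv g (w t₀)‖ ^ 2 = d := by
    simpa using norm_deriv_sq_of_inner_eq_comp_sub (hg _) hgk (by fun_prop)
      (hasDerivAt_deriv_cos_pow_zero d)
  have hγ : HasDerivAt (fun t => g (w t)) (deriv w t₀ • deriv g (w t₀)) t₀ :=
    (hg _).hasDerivAt.scomp t₀ hw.hasDerivAt
  refine ⟨hγ.differentiableAt, ?_⟩
  rw [hγ.deriv, norm_smul, mul_pow, hspeed, Real.norm_eq_abs, sq_abs, mul_comm]

/-- for `w` differentiable at `t₀`, the curve
`γ(t) = ν(cos(w(t))·e₀ + sin(w(t))·e₁)` is differentiable at `t₀` and satisfies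
`‖γ'(t₀)‖² = d·w'(t₀)²`. -/
theorem veronese_curve_speed (n d : ℕ) (hn : 0 < n) (hd : 0 < d)
    (w : ℝ → ℝ) (t₀ : ℝ) (hw : DifferentiableAt ℝ w t₀) :
    DifferentiableAt ℝ
      (fun t => veronese n d
        (Real.cos (w t) • EuclideanSpace.single 0 1 +
          Real.sin (w t) • EuclideanSpace.single 1 1)) t₀ ∧
    ‖deriv (fun t => veronese n d
        (Real.cos (w t) • EuclideanSpace.single 0 1 +
          Real.sin (w t) • EuclideanSpace.single 1 1)) t₀‖ ^ 2 =
      (d : ℝ) * (deriv w t₀) ^ 2 :=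
  veronese_curve_speed_general n d hn w t₀ hw
end
end

section
/- Let F = ε·Ψ(ℓ_1,…,ℓ_r) ∈ X with ε ∈ {−1,1} and ‖ℓ_i‖ = 1 for all i. If ⟨F − E, b_{i,k}⟩ = 0 for all 1 ≤ i ≤ r and 1 ≤ k ≤ n_i (i.e. F − E is orthogonal to the tangent space T of X at E), then F = E, or F = −E, or ⟨F, E⟩ = 0. -/
/-! Since `⟪F, E⟫ = ε ∏ᵢ ℓᵢ₀^dᵢ` and `E` is a standard basis vector, `⟪F, E⟫ ≠ 0` forces every
`ℓᵢ₀ ≠ 0`. The `b_{i,k}`-coordinate of `F` is then `ε √dᵢ ℓᵢ₀^(dᵢ-1) ℓᵢₖ ∏_{j ≠ i} ℓⱼ₀^dⱼ`, so the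
orthogonality conditions say `ℓᵢₖ = 0` for `k ≥ 1`: each `ℓᵢ` is a unit multiple of `e₀`, and by
multihomogeneity of `Ψ` the point `F` is `±E`. -/

open scoped RealInnerProductSpace BigOperators

noncomputable section

/-- The Segre–Veronese parametrization. -/
def Psi (r : ℕ) (n d : Fin r → ℕ)
    (ℓ : (i : Fin r) → EuclideanSpace ℝ (Fin (n i + 1))) :
    EuclideanSpace ℝ ((i : Fin r) → Exps (n i) (d i)) :=
    WithLp.toLp 2 fun (α : (i : Fin r) → Exps (n i) (d i)) =>
  ∏ i, veronese (n i) (d i) (ℓ i) (α i)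

/-- The exponent `(d, 0, …, 0)`. -/
def expPow (n d : ℕ) : Exps n d :=
  ⟨Pi.single 0 d, by simp⟩

/-- The exponent with `d - 1` in position `0`, `1` in position `k` (`1 ≤ k ≤ n`),
and `0` elsewhere. -/
def expTang (n d : ℕ) (hd : 0 < d) (k : Fin n) : Exps n d :=
  ⟨Pi.single (0 : Fin (n + 1)) (d - 1) + Pi.single k.succ 1, by
    simp [Finset.sum_add_distrib, Nat.sub_add_cancel hd]⟩

/-- The distinguished point `E = x_0^{d_1} ⊗ ⋯ ⊗ x_0^{d_r}`. -/
def Epoint (r : ℕ) (n d : Fin r → ℕ) :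
    EuclideanSpace ℝ ((i : Fin r) → Exps (n i) (d i)) :=
  Psi r n d fun _ => EuclideanSpace.single 0 1

/-- The tangent basis vector `b_{i,k}`: the standard basis vector of
`EuclideanSpace ℝ A` indexed by the tuple `(α_1, …, α_r)` with `α_j = (d_j,0,…,0)` for
`j ≠ i` and `α_i` having entry `d_i - 1` in position `0` and entry `1` in position `k`. -/
def bvec (r : ℕ) (n d : Fin r → ℕ) (hd : ∀ i, 0 < d i) (i : Fin r) (k : Fin (n i)) :
    EuclideanSpace ℝ ((i : Fin r) → Exps (n i) (d i)) :=
  EuclideanSpace.single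
    (Function.update (fun j => expPow (n j) (d j)) i (expTang (n i) (d i) (hd i) k)) 1


open Finset

lemma prod_pow_piSingle {ι M : Type*} [Fintype ι] [DecidableEq ι] [CommMonoid M]
    (f : ι → M) (j : ι) (e : ℕ) : ∏ i, f i ^ (Pi.single j e : ι → ℕ) i = f j ^ e := by
  rw [Fintype.prod_eq_single j fun i hi => by simp [Pi.single_eq_of_ne hi]]
  simp

lemma eq_smul_single_zero_of_apply_succ_eq_zero {n : ℕ} {x : EuclideanSpace ℝ (Fin (n + 1))}
    (h : ∀ k : Fin n, x k.succ = 0) : x = x 0 • EuclideanSpace.single 0 1 := by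
  ext m
  cases m using Fin.cases <;> simp [h, Fin.succ_ne_zero]

lemma abs_apply_zero_eq_one_of_norm_eq_one {n : ℕ} {x : EuclideanSpace ℝ (Fin (n + 1))}
    (h : ∀ k : Fin n, x k.succ = 0) (hx : ‖x‖ = 1) : |x 0| = 1 := by
  rwa [eq_smul_single_zero_of_apply_succ_eq_zero h, norm_smul, PiLp.norm_single, norm_one,
    mul_one, Real.norm_eq_abs] at hx

lemma eq_expPow_of_apply_succ_eq_zero {n d : ℕ} {α : Exps n d}
    (h : ∀ k : Fin n, α.1 k.succ = 0) : α = expPow n d := by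
  have h0 : α.1 0 = d := by simpa [Fin.sum_univ_succ, h] using α.2
  ext m
  cases m using Fin.cases <;> simp [expPow, h0, h, Fin.succ_ne_zero]

lemma expTang_ne_expPow {n d : ℕ} (hd : 0 < d) (k : Fin n) :
    expTang n d hd k ≠ expPow n d := fun h => by
  simpa [expTang, expPow, Pi.single_eq_of_ne (Fin.succ_ne_zero k)] using
    congrArg (fun α : Exps n d => α.1 k.succ) h

lemma veronese_apply_expPow {n d : ℕ} (ℓ : EuclideanSpace ℝ (Fin (n + 1))) :
    veronese n d ℓ (expPow n d) = ℓ 0 ^ d := by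
  simp [veronese, expPow, Pi.single_apply, apply_ite, div_self, Nat.factorial_ne_zero]

lemma veronese_apply_expTang {n d : ℕ} (hd : 0 < d) (k : Fin n)
    (ℓ : EuclideanSpace ℝ (Fin (n + 1))) :
    veronese n d ℓ (expTang n d hd k) = Real.sqrt d * (ℓ 0 ^ (d - 1) * ℓ k.succ) := by
  have h_denom : ∏ i, (((Pi.single 0 (d - 1) : Fin (n + 1) → ℕ) i +
      (Pi.single k.succ 1 : Fin (n + 1) → ℕ) i).factorial : ℝ) = (d - 1).factorial := by
    rw [Fin.prod_univ_succ]
    simp [Pi.single_apply, apply_ite]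
  have h_num : (d.factorial : ℝ) = d * (d - 1).factorial := by
    rw [← Nat.mul_factorial_pred hd.ne']
    push_cast [Nat.cast_pred hd]
    ring
  simp only [veronese, expTang, WithLp.ofLp_toLp, Pi.add_apply, h_denom, pow_add,
    prod_mul_distrib, prod_pow_piSingle, pow_one]
  rw [h_num, mul_div_cancel_right₀ _ (by positivity)]

lemma veronese_single_zero_one_apply {n d : ℕ} (α : Exps n d) :
    veronese n d (EuclideanSpace.single 0 1) α = if α = expPow n d then 1 else 0 := by
  split_ifs with hα
  · simp [hα, veronese_apply_expPow]
  · obtain ⟨k, hk⟩ : ∃ k : Fin n, α.1 k.succ ≠ 0 := by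
      by_contra! h
      exact hα (eq_expPow_of_apply_succ_eq_zero h)
    refine mul_eq_zero_of_right _ (prod_eq_zero (mem_univ k.succ) ?_)
    simp [Fin.succ_ne_zero, hk]

lemma veronese_smul {n d : ℕ} (c : ℝ) (ℓ : EuclideanSpace ℝ (Fin (n + 1))) :
    veronese n d (c • ℓ) = c ^ d • veronese n d ℓ := by
  ext α
  simp only [veronese, PiLp.smul_apply, WithLp.ofLp_toLp, smul_eq_mul, mul_pow,
    prod_mul_distrib, prod_pow_eq_pow_sum, α.2]
  ring

lemma Psi_smul (r : ℕ) (n d : Fin r → ℕ) (c : Fin r → ℝ)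
    (ℓ : (i : Fin r) → EuclideanSpace ℝ (Fin (n i + 1))) :
    Psi r n d (fun i => c i • ℓ i) = (∏ i, c i ^ d i) • Psi r n d ℓ := by
  ext α
  simp [Psi, veronese_smul, prod_mul_distrib]

lemma Psi_apply_expPow (r : ℕ) (n d : Fin r → ℕ)
    (ℓ : (i : Fin r) → EuclideanSpace ℝ (Fin (n i + 1))) :
    Psi r n d ℓ (fun j => expPow (n j) (d j)) = ∏ i, ℓ i 0 ^ d i := by
  simp [Psi, veronese_apply_expPow]

lemma Psi_apply_update_expTang (r : ℕ) (n d : Fin r → ℕ) (hd : ∀ i, 0 < d i)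
    (ℓ : (i : Fin r) → EuclideanSpace ℝ (Fin (n i + 1))) (i : Fin r) (k : Fin (n i)) :
    Psi r n d ℓ (Function.update (fun j => expPow (n j) (d j)) i (expTang (n i) (d i) (hd i) k)) =
      veronese (n i) (d i) (ℓ i) (expTang (n i) (d i) (hd i) k) * ∏ j ∈ {i}ᶜ, ℓ j 0 ^ d j := by
  simp only [Psi, WithLp.ofLp_toLp]
  rw [Fintype.prod_eq_mul_prod_compl i, Function.update_self]
  congr 1
  refine prod_congr rfl fun j hj => ?_
  rw [Function.update_of_ne (by simpa using hj), veronese_apply_expPow]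

lemma Epoint_eq_single (r : ℕ) (n d : Fin r → ℕ) :
    Epoint r n d = EuclideanSpace.single (fun j => expPow (n j) (d j)) 1 := by
  ext α
  simp [Epoint, Psi, veronese_single_zero_one_apply, Fintype.prod_boole, funext_iff]

lemma Psi_eq_smul_Epoint (r : ℕ) (n d : Fin r → ℕ)
    {ℓ : (i : Fin r) → EuclideanSpace ℝ (Fin (n i + 1))} (h : ∀ i (k : Fin (n i)), ℓ i k.succ = 0) :
    Psi r n d ℓ = (∏ i, ℓ i 0 ^ d i) • Epoint r n d := by
  conv_lhs => rw [funext fun i => eq_smul_single_zero_of_apply_succ_eq_zero (h i), Psi_smul]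
  rfl

lemma inner_Epoint (r : ℕ) (n d : Fin r → ℕ)
    (x : EuclideanSpace ℝ ((i : Fin r) → Exps (n i) (d i))) :
    ⟪x, Epoint r n d⟫ = x (fun j => expPow (n j) (d j)) := by
  simp [Epoint_eq_single, EuclideanSpace.inner_single_right]

lemma inner_bvec (r : ℕ) (n d : Fin r → ℕ) (hd : ∀ i, 0 < d i) (i : Fin r) (k : Fin (n i))
    (x : EuclideanSpace ℝ ((i : Fin r) → Exps (n i) (d i))) :
    ⟪x, bvec r n d hd i k⟫ =
      x (Function.update (fun j => expPow (n j) (d j)) i (expTang (n i) (d i) (hd i) k)) := by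
  simp [bvec, EuclideanSpace.inner_single_right]

lemma Epoint_apply_update_expTang (r : ℕ) (n d : Fin r → ℕ) (hd : ∀ i, 0 < d i)
    (i : Fin r) (k : Fin (n i)) :
    Epoint r n d (Function.update (fun j => expPow (n j) (d j)) i (expTang (n i) (d i) (hd i) k))
      = 0 := by
  rw [Epoint_eq_single, PiLp.single_apply, if_neg]
  intro h
  simpa using expTang_ne_expPow (hd i) k (by simpa using congrFun h i)

theorem bottleneck_orthogonality_general (r : ℕ) (n d : Fin r → ℕ)
    (hd : ∀ i, 0 < d i)
    (ε : ℝ) (hε : ε = 1 ∨ ε = -1)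
    (ℓ : (i : Fin r) → EuclideanSpace ℝ (Fin (n i + 1))) (hℓ : ∀ i, ‖ℓ i‖ = 1)
    (F : EuclideanSpace ℝ ((i : Fin r) → Exps (n i) (d i)))
    (hF : F = ε • Psi r n d ℓ)
    (horth : ∀ (i : Fin r) (k : Fin (n i)), ⟪F - Epoint r n d, bvec r n d hd i k⟫ = 0) :
    F = Epoint r n d ∨ F = -Epoint r n d ∨ ⟪F, Epoint r n d⟫ = 0 := by
  subst hF
  rcases eq_or_ne ⟪ε • Psi r n d ℓ, Epoint r n d⟫ 0 with hFE | hFE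
  · exact .inr (.inr hFE)
  rw [inner_Epoint, PiLp.smul_apply, Psi_apply_expPow, smul_eq_mul] at hFE
  have hε0 : ε ≠ 0 := left_ne_zero_of_mul hFE
  have hℓ0 : ∀ i, ℓ i 0 ≠ 0 := fun i h0 =>
    hFE (mul_eq_zero_of_right _ (prod_eq_zero (mem_univ i) (by simp [h0, (hd i).ne'])))
  have hℓsucc : ∀ i (k : Fin (n i)), ℓ i k.succ = 0 := fun i k => by
    have h := horth i k
    rw [inner_bvec, PiLp.sub_apply, Epoint_apply_update_expTang, sub_zero, PiLp.smul_apply,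
      Psi_apply_update_expTang, veronese_apply_expTang, smul_eq_mul] at h
    simpa [hε0, hℓ0, (hd i).ne', prod_eq_zero_iff] using h
  have h_abs : |ε * ∏ i, ℓ i 0 ^ d i| = 1 := by
    have hε_abs : |ε| = 1 := by rcases hε with rfl | rfl <;> simp
    simp [abs_mul, abs_prod, abs_pow, hε_abs,
      fun i => abs_apply_zero_eq_one_of_norm_eq_one (hℓsucc i) (hℓ i)]
  rw [Psi_eq_smul_Epoint r n d hℓsucc, smul_smul]
  rcases (abs_eq zero_le_one).mp h_abs with h | h
  · exact .inl (by rw [h, one_smul])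
  · exact .inr (.inl (by rw [h, neg_one_smul]))

/-- if `F = ε·Ψ(ℓ₁, …, ℓ_r)` is a point of the Segre–Veronese
manifold such that `F − E` is orthogonal to the tangent space of `X` at `E`
(i.e. to all `b_{i,k}`), then `F = E`, or `F = −E`, or `⟨F, E⟩ = 0`. -/
theorem bottleneck_orthogonality (r : ℕ) (hr : 0 < r) (n d : Fin r → ℕ)
    (hn : ∀ i, 0 < n i) (hd : ∀ i, 0 < d i)
    (ε : ℝ) (hε : ε = 1 ∨ ε = -1)
    (ℓ : (i : Fin r) → EuclideanSpace ℝ (Fin (n i + 1))) (hℓ : ∀ i, ‖ℓ i‖ = 1)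
    (F : EuclideanSpace ℝ ((i : Fin r) → Exps (n i) (d i)))
    (hF : F = ε • Psi r n d ℓ)
    (horth : ∀ (i : Fin r) (k : Fin (n i)), ⟪F - Epoint r n d, bvec r n d hd i k⟫ = 0) :
    F = Epoint r n d ∨ F = -Epoint r n d ∨ ⟪F, Epoint r n d⟫ = 0 :=
  bottleneck_orthogonality_general r n d hd ε hε ℓ hℓ F hF horth
end
end
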